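/- Let λ ≠ 0 be a real number, let E be a real normed vector space, let y : ℝ → E be differentiable at a point t with derivative y'(t). Then the ZeroSNet scheme is consistent at t: (1/h)·( y(t+h) − α₀(λ)·y(t) − α₁(λ)·y(t−h) − α₂(λ)·y(t−2h) − h·β(λ)·y'(t) ) tends to 0 as h tends to 0 from the right. -/
import Mathlib
open Topology


/-- ZeroSNet coefficient α₀(λ) = 3(1+λ)/(4λ). -/
noncomputable def zerosAlpha0 (l : ℝ) : ℝ := 3 * (1 + l) / (4 * l)

/-- ZeroSNet coefficient α₁(λ) = −1/λ. -/
noncomputable def zerosAlpha1 (l : ℝ) : ℝ := -1 / l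

/-- ZeroSNet coefficient α₂(λ) = (1+λ)/(4λ). -/
noncomputable def zerosAlpha2 (l : ℝ) : ℝ := (1 + l) / (4 * l)

/-- ZeroSNet coefficient β(λ) = (3λ−1)/(2λ). -/
noncomputable def zerosBeta (l : ℝ) : ℝ := (3 * l - 1) / (2 * l)

/-- Consistency of the ZeroSNet scheme: if `y` is differentiable at `t` with derivative `y'`,
then `(1/h)·(y(t+h) − α₀(λ)·y(t) − α₁(λ)·y(t−h) − α₂(λ)·y(t−2h) − h·β(λ)·y'(t)) → 0`
as `h → 0⁺`. -/
theorem zerosnet_consistent (l : ℝ) (hl : l ≠ 0) {E : Type*} [NormedAddCommGroup E]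
    [NormedSpace ℝ E] (y : ℝ → E) (t : ℝ) (y' : E) (hy : HasDerivAt y y' t) :
    Filter.Tendsto
      (fun h : ℝ => (1 / h) •
        (y (t + h) - zerosAlpha0 l • y t - zerosAlpha1 l • y (t - h)
          - zerosAlpha2 l • y (t - 2 * h) - (h * zerosBeta l) • y'))
      (nhdsWithin 0 (Set.Ioi 0)) (nhds 0) := by
  set F : ℝ → E := fun h => h⁻¹ • (y (t + h) - y t) - y' with hF
  have hS : Filter.Tendsto F (nhdsWithin 0 {(0:ℝ)}ᶜ) (nhds 0) := by
    have := hy.tendsto_slope_zero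
    have h0 : y' - y' = 0 := sub_self y'
    simpa [hF, h0] using this.sub_const y'
  have hmem : Filter.Tendsto (fun h : ℝ => h) (nhdsWithin 0 (Set.Ioi 0))
      (nhdsWithin 0 {(0:ℝ)}ᶜ) :=
    Filter.Tendsto.mono_left Filter.tendsto_id
      (nhdsWithin_mono 0 (fun x hx => ne_of_gt hx))
  have hneg : Filter.Tendsto (fun h : ℝ => -h) (nhdsWithin 0 (Set.Ioi 0))
      (nhdsWithin 0 {(0:ℝ)}ᶜ) := by
    apply tendsto_nhdsWithin_of_tendsto_nhds_of_eventually_within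
    · have : Filter.Tendsto (fun h : ℝ => -h) (𝓝 (0:ℝ)) (𝓝 (-0)) :=
        continuous_neg.tendsto 0
      simpa using this.mono_left nhdsWithin_le_nhds
    · filter_upwards [self_mem_nhdsWithin] with x hx
      exact (neg_ne_zero.mpr (ne_of_gt hx))
  have hneg2 : Filter.Tendsto (fun h : ℝ => -(2*h)) (nhdsWithin 0 (Set.Ioi 0))
      (nhdsWithin 0 {(0:ℝ)}ᶜ) := by
    apply tendsto_nhdsWithin_of_tendsto_nhds_of_eventually_within
    · have : Filter.Tendsto (fun h : ℝ => -(2*h)) (𝓝 0) (𝓝 (-(2*0))) := by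
        exact (continuous_const.mul continuous_id).neg.tendsto 0
      simpa using this.mono_left nhdsWithin_le_nhds
    · filter_upwards [self_mem_nhdsWithin] with x hx
      have hx' : (0:ℝ) < x := hx
      have : (2:ℝ) * x > 0 := by positivity
      exact (neg_ne_zero.mpr (ne_of_gt this))
  have hlim : Filter.Tendsto
      (fun h : ℝ => F h + zerosAlpha1 l • F (-h) + (2 * zerosAlpha2 l) • F (-(2*h)))
      (nhdsWithin 0 (Set.Ioi 0)) (nhds 0) := by
    have h1 := hS.comp hmem
    have h2 := (hS.comp hneg).const_smul (zerosAlpha1 l)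
    have h3 := (hS.comp hneg2).const_smul (2 * zerosAlpha2 l)
    simpa using (h1.add h2).add h3
  refine hlim.congr' ?_
  filter_upwards [self_mem_nhdsWithin] with h hh
  have hne : h ≠ 0 := ne_of_gt hh
  simp only [hF, Function.comp]
  have e1 : t - h = t + -h := by ring
  have e2 : t - 2 * h = t + -(2*h) := by ring
  rw [e1, e2]
  unfold zerosAlpha0 zerosAlpha1 zerosAlpha2 zerosBeta
  match_scalars <;> field_simp <;> ring
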